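/- Let S be a faithfully flat weak content R-algebra such that the inclusion R ⊆ S satisfies INC. Then S is a semicontent R-algebra. -/

import Mathlib

section OhmRushDefs

variable {R S : Type*} [CommRing R] [CommRing S]

/-- The Ohm–Rush content of an element `s` of an `R`-algebra `S` (given by a ring
homomorphism `f : R →+* S`): the intersection of all ideals `I` of `R` with `s ∈ IS`. -/
def ORContent (f : R →+* S) (s : S) : Ideal R :=
  sInf {I : Ideal R | s ∈ Ideal.map f I}

/-- `S` is an Ohm–Rush `R`-algebra if every `s ∈ S` lies in the extension of its content. -/
def IsOhmRushAlgebra (f : R →+* S) : Prop :=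
  ∀ s : S, s ∈ Ideal.map f (ORContent f s)

/-- Flatness of a ring homomorphism. -/
def RingHomFlat (f : R →+* S) : Prop :=
  letI := f.toAlgebra; Module.Flat R S

/-- Faithful flatness of a ring homomorphism. -/
def RingHomFaithfullyFlat (f : R →+* S) : Prop :=
  letI := f.toAlgebra; Module.FaithfullyFlat R S

/-- Module-freeness of a ring homomorphism. -/
def RingHomFree (f : R →+* S) : Prop :=
  letI := f.toAlgebra; Module.Free R S

/-- Weak content algebra: Ohm–Rush and `√c(fg) = √(c(f)c(g))`. -/
def IsWeakContentAlgebra (f : R →+* S) : Prop :=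
  IsOhmRushAlgebra f ∧ ∀ s t : S,
    (ORContent f (s * t)).radical = (ORContent f s * ORContent f t).radical

/-- Semicontent algebra: faithfully flat Ohm–Rush, and for every multiplicative subset `W`
of `R`, if `c(s)R_W = R_W` then `c(st)R_W = c(t)R_W`. -/
def IsSemicontentAlgebra (f : R →+* S) : Prop :=
  IsOhmRushAlgebra f ∧ RingHomFaithfullyFlat f ∧
    ∀ (W : Submonoid R) (s t : S),
      Ideal.map (algebraMap R (Localization W)) (ORContent f s) = ⊤ →
      Ideal.map (algebraMap R (Localization W)) (ORContent f (s * t)) =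
        Ideal.map (algebraMap R (Localization W)) (ORContent f t)

/-- Content algebra: faithfully flat Ohm–Rush satisfying the Dedekind–Mertens type formula. -/
def IsContentAlgebra (f : R →+* S) : Prop :=
  IsOhmRushAlgebra f ∧ RingHomFaithfullyFlat f ∧
    ∀ s t : S, ∃ n : ℕ, 0 < n ∧
      ORContent f s ^ n * ORContent f t = ORContent f s ^ (n - 1) * ORContent f (s * t)

/-- A ring homomorphism satisfies INC if comparable primes of `S` with the same
contraction to `R` are equal. -/
def SatisfiesINC (f : R →+* S) : Prop :=
  ∀ Q Q' : Ideal S, Q.IsPrime → Q'.IsPrime → Q ≤ Q' →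
    Ideal.comap f Q = Ideal.comap f Q' → Q = Q'

/-- A valuation domain: a domain whose divisibility is total. -/
def IsValuationDomain (A : Type*) [CommRing A] : Prop :=
  IsDomain A ∧ ∀ a b : A, ∃ c : A, a * c = b ∨ b * c = a

/-- A Prüfer domain: a domain whose localization at every maximal ideal is a
valuation domain. -/
def IsPruferDomain (A : Type*) [CommRing A] : Prop :=
  IsDomain A ∧ ∀ (P : Ideal A) (hP : P.IsMaximal),
    haveI := hP.isPrime
    IsValuationDomain (Localization.AtPrime P)

end OhmRushDefs

/-!
The hypothesis `c(s)R_W = R_W` says that `c(s)` meets `W`; the point is that then `s` divides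
some `w ∈ W` in `S`. Otherwise some prime `Q ⊇ sS` misses `W`. For `P = Q ∩ R`, faithful flatness
gives `PS ∩ R = P` and the weak content property makes `PS` prime, so INC forces `Q = PS`; then
`s ∈ PS` gives `c(s) ⊆ P`, contradicting `c(s) ∩ W ≠ ∅`. From `s ∣ w` we get `w t ∈ c(st)S`, which
flatness turns into `c(t) ⊆ (c(st) : w)`, hence `c(t)R_W ⊆ c(st)R_W`; the reverse inclusion comes
from `c(st) ⊆ c(s)c(t)`.
-/

section Flat

open TensorProduct

variable {R S : Type*} [CommRing R] [CommRing S] [Algebra R S]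

theorem Ideal.tmul_one_eq_zero_iff_mem_map (I : Ideal R) (t : S) :
    t ⊗ₜ[R] (1 : R ⧸ I) = 0 ↔ t ∈ I.map (algebraMap R S) := by
  rw [← Algebra.TensorProduct.quotIdealMapEquivTensorQuot_mk,
    map_eq_zero_iff _ (AlgEquiv.injective _), Ideal.Quotient.eq_zero_iff_mem]

-- Multiplication by `r` embeds `R ⧸ (I : r)` into `R ⧸ I`; flatness keeps it injective after `⊗ S`.
theorem Ideal.mem_map_colon_singleton_of_flat [Module.Flat R S] {I : Ideal R} {r : R} {t : S}
    (h : algebraMap R S r * t ∈ I.map (algebraMap R S)) :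
    t ∈ (I.colon {r}).map (algebraMap R S) := by
  let φ : (R ⧸ I.colon {r}) →ₗ[R] R ⧸ I :=
    Submodule.mapQ _ _ (LinearMap.lsmul R R r) fun x hx => by
      simpa [mul_comm] using Submodule.mem_colon_singleton.mp hx
  have hφ : Function.Injective φ := by
    rw [← LinearMap.ker_eq_bot, Submodule.eq_bot_iff]
    intro x hx
    obtain ⟨x, rfl⟩ := Submodule.Quotient.mk_surjective _ x
    rw [LinearMap.mem_ker, Submodule.mapQ_apply, Submodule.Quotient.mk_eq_zero] at hx
    rw [Submodule.Quotient.mk_eq_zero, Submodule.mem_colon_singleton]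
    simpa [mul_comm] using hx
  rw [← Ideal.tmul_one_eq_zero_iff_mem_map]
  apply Module.Flat.lTensor_preserves_injective_linearMap φ hφ
  rw [LinearMap.lTensor_tmul, map_zero]
  have : φ 1 = r • (1 : R ⧸ I) := rfl
  rw [this, ← smul_tmul, Ideal.tmul_one_eq_zero_iff_mem_map, Algebra.smul_def]
  exact h

end Flat

theorem IsLocalization.map_colon_singleton_le {R A : Type*} [CommRing R] [CommRing A]
    [Algebra R A] {W : Submonoid R} [IsLocalization W A] (I : Ideal R) {w : R} (hw : w ∈ W) :
    (I.colon {w}).map (algebraMap R A) ≤ I.map (algebraMap R A) := by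
  rw [Ideal.map_le_iff_le_comap]
  intro x hx
  exact (IsLocalization.algebraMap_mem_map_algebraMap_iff W A I x).mpr
    ⟨w, hw, mul_comm x w ▸ Submodule.mem_colon_singleton.mp hx⟩

section Content

variable {R S : Type*} [CommRing R] [CommRing S] {f : R →+* S}

theorem RingHomFaithfullyFlat.flat (hf : RingHomFaithfullyFlat f) : RingHomFlat f :=
  letI := f.toAlgebra
  Module.FaithfullyFlat.toFlat (self := hf)

theorem IsOhmRushAlgebra.mem_map_iff_content_le (hOR : IsOhmRushAlgebra f) {s : S} {I : Ideal R} :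
    s ∈ I.map f ↔ ORContent f s ≤ I :=
  ⟨fun h => sInf_le h, fun h => Ideal.map_mono h (hOR s)⟩

theorem IsOhmRushAlgebra.content_mul_le (hOR : IsOhmRushAlgebra f) (s t : S) :
    ORContent f (s * t) ≤ ORContent f s * ORContent f t := by
  rw [← hOR.mem_map_iff_content_le, Ideal.map_mul]
  exact Ideal.mul_mem_mul (hOR s) (hOR t)

theorem IsOhmRushAlgebra.content_le_colon_of_flat (hOR : IsOhmRushAlgebra f) (hf : RingHomFlat f)
    {I : Ideal R} {r : R} {t : S} (h : f r * t ∈ I.map f) : ORContent f t ≤ I.colon {r} := by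
  let := f.toAlgebra
  have : Module.Flat R S := hf
  exact hOR.mem_map_iff_content_le.mp (Ideal.mem_map_colon_singleton_of_flat h)

theorem IsWeakContentAlgebra.isPrime_map (hwc : IsWeakContentAlgebra f) {P : Ideal R}
    [hP : P.IsPrime] (hPS : P.map f ≠ ⊤) : (P.map f).IsPrime := by
  refine ⟨hPS, fun {x y} hxy => ?_⟩
  simp only [hwc.1.mem_map_iff_content_le] at hxy ⊢
  apply hP.mul_le.mp
  calc ORContent f x * ORContent f y ≤ (ORContent f x * ORContent f y).radical := Ideal.le_radical
    _ = (ORContent f (x * y)).radical := (hwc.2 x y).symm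
    _ ≤ P := hP.radical_le_iff.mpr hxy

theorem IsWeakContentAlgebra.map_comap_eq_of_isPrime (hwc : IsWeakContentAlgebra f)
    (hff : RingHomFaithfullyFlat f) (hinc : SatisfiesINC f) (Q : Ideal S) [hQ : Q.IsPrime] :
    (Q.comap f).map f = Q := by
  have hcomap : ((Q.comap f).map f).comap f = Q.comap f := by
    let := f.toAlgebra
    have : Module.FaithfullyFlat R S := hff
    exact Ideal.comap_map_eq_self_of_faithfullyFlat _
  have hprime : ((Q.comap f).map f).IsPrime := by
    refine hwc.isPrime_map fun h => (Ideal.comap_isPrime f Q).ne_top ?_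
    rw [← hcomap, h, Ideal.comap_top]
  exact hinc _ _ hprime hQ Ideal.map_comap_le hcomap

theorem IsWeakContentAlgebra.exists_dvd_of_not_disjoint (hwc : IsWeakContentAlgebra f)
    (hff : RingHomFaithfullyFlat f) (hinc : SatisfiesINC f) {W : Submonoid R} {s : S}
    (hs : ¬Disjoint (W : Set R) (ORContent f s)) : ∃ w ∈ W, s ∣ f w := by
  by_contra! h
  obtain ⟨Q, hQ, hsQ, hQW⟩ := Ideal.exists_le_prime_disjoint (I := Ideal.span {s}) (W.map f) <|
    Set.disjoint_left.mpr fun x hx ⟨w, hw, hwx⟩ =>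
      h w hw (hwx ▸ Ideal.mem_span_singleton.mp hx)
  obtain ⟨w, hw, hws⟩ := Set.not_disjoint_iff.mp hs
  have hcs : ORContent f s ≤ Q.comap f := by
    rw [← hwc.1.mem_map_iff_content_le, hwc.map_comap_eq_of_isPrime hff hinc Q]
    exact hsQ (Ideal.mem_span_singleton_self s)
  exact Set.disjoint_left.mp hQW (hcs hws) ⟨w, hw, rfl⟩

end Content

theorem semicontent_of_weakContent_of_inc_general {R S : Type*} [CommRing R] [CommRing S]
    (f : R →+* S)
    (hff : RingHomFaithfullyFlat f) (hwc : IsWeakContentAlgebra f)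
    (hinc : SatisfiesINC f) :
    IsSemicontentAlgebra f := by
  refine ⟨hwc.1, hff, fun W s t hs => le_antisymm ?_ ?_⟩
  · calc (ORContent f (s * t)).map (algebraMap R (Localization W))
        ≤ (ORContent f s * ORContent f t).map (algebraMap R (Localization W)) :=
          Ideal.map_mono (hwc.1.content_mul_le s t)
      _ = (ORContent f t).map (algebraMap R (Localization W)) := by
          rw [Ideal.map_mul, hs, Ideal.top_mul]
  · obtain ⟨w, hw, a, ha⟩ := hwc.exists_dvd_of_not_disjoint hff hinc fun hd =>
      (IsLocalization.map_algebraMap_ne_top_iff_disjoint W _ _).mpr hd hs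
    have hwt : f w * t ∈ (ORContent f (s * t)).map f := by
      rw [ha, mul_right_comm]
      exact Ideal.mul_mem_right _ _ (hwc.1 (s * t))
    exact (Ideal.map_mono (hwc.1.content_le_colon_of_flat hff.flat hwt)).trans
      (IsLocalization.map_colon_singleton_le _ hw)

/-- A faithfully flat weak content algebra `R ⊆ S` satisfying INC is a
semicontent algebra. -/
theorem semicontent_of_weakContent_of_inc {R S : Type*} [CommRing R] [CommRing S]
    (f : R →+* S) (hinj : Function.Injective f)
    (hff : RingHomFaithfullyFlat f) (hwc : IsWeakContentAlgebra f)
    (hinc : SatisfiesINC f) :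
    IsSemicontentAlgebra f :=
  semicontent_of_weakContent_of_inc_general f hff hwc hinc
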